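/- arXiv:2004.12268 — 2 statements merged into one kernel-verified Lean document; each statement's English description precedes it below -/
import Mathlib

section
/- Let (b_j)_{j≥1} be a nonincreasing sequence of nonnegative real numbers, and let p ∈ (0,1) be such that Σ_{j≥1} b_j^p < ∞. Then for every integer s ≥ 1, Σ_{j≥s+1} b_j² ≤ (1/(2/p − 1)) · (Σ_{j≥1} b_j^p)^{2/p} · s^{−2/p + 1}. -/
/-!
Since `b` is nonincreasing, `(j + 1) b_j^p ≤ b_0^p + ⋯ + b_j^p ≤ S := ∑ b^p`, so
`b_j^q ≤ S^{q/p} (j + 1)^{-q/p}`. For `q > p` the tail of this majorant is bounded by the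
integral of `x^{-q/p}` over `(s, ∞)`, which is `s^{1 - q/p} / (q/p - 1)`.
-/

open Set MeasureTheory

theorem Antitone.succ_mul_le_tsum {f : ℕ → ℝ} (hf : Antitone f) (hf0 : ∀ n, 0 ≤ f n)
    (hsum : Summable f) (n : ℕ) : ((n : ℝ) + 1) * f n ≤ ∑' i, f i :=
  calc ((n : ℝ) + 1) * f n = ∑ _i ∈ Finset.range (n + 1), f n := by simp
    _ ≤ ∑ i ∈ Finset.range (n + 1), f i :=
      Finset.sum_le_sum fun i hi => hf (Nat.lt_succ_iff.mp (Finset.mem_range.mp hi))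
    _ ≤ ∑' i, f i := hsum.sum_le_tsum _ fun i _ => hf0 i

theorem tsum_nat_add_rpow_neg_le {q : ℝ} (hq : 1 < q) {s : ℕ} (hs : 0 < s) :
    ∑' n : ℕ, ((n + s + 1 : ℕ) : ℝ) ^ (-q) ≤ (s : ℝ) ^ (1 - q) / (q - 1) := by
  have hs0 : (0 : ℝ) < s := by exact_mod_cast hs
  have hanti : AntitoneOn (fun x : ℝ => x ^ (-q)) (Ici (s : ℝ)) := fun x hx y _ hxy =>
    Real.rpow_le_rpow_of_nonpos (hs0.trans_le hx) hxy (by linarith)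
  calc ∑' n : ℕ, ((n + s + 1 : ℕ) : ℝ) ^ (-q) ≤ ∫ x in Ioi (s : ℝ), x ^ (-q) :=
        hanti.tsum_comp_add_le_integral s (integrableOn_Ioi_rpow_of_lt (by linarith) hs0)
          fun x hx => Real.rpow_nonneg (hs0.trans hx).le _
    _ = (s : ℝ) ^ (1 - q) / (q - 1) := by
        rw [integral_Ioi_rpow_of_lt (by linarith) hs0, neg_div, ← div_neg]
        ring_nf

namespace Antitone

variable {b : ℕ → ℝ} {p : ℝ}

theorem rpow_le_tsum_rpow_mul (hb : ∀ n, 0 ≤ b n) (hmono : Antitone b) (hp : 0 < p)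
    (hsum : Summable fun n => b n ^ p) {q : ℝ} (hq : 0 ≤ q) (j : ℕ) :
    b j ^ q ≤ (∑' n, b n ^ p) ^ (q / p) * ((j + 1 : ℕ) : ℝ) ^ (-(q / p)) := by
  have hj : (0 : ℝ) < (j : ℝ) + 1 := by positivity
  have hbp : ((j : ℝ) + 1) * b j ^ p ≤ ∑' n, b n ^ p :=
    succ_mul_le_tsum (fun m n hmn => Real.rpow_le_rpow (hb n) (hmono hmn) hp.le)
      (fun n => Real.rpow_nonneg (hb n) p) hsum j
  calc b j ^ q = (b j ^ p) ^ (q / p) := by rw [← Real.rpow_mul (hb j), mul_div_cancel₀ q hp.ne']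
    _ ≤ ((∑' n, b n ^ p) / ((j : ℝ) + 1)) ^ (q / p) :=
        Real.rpow_le_rpow (Real.rpow_nonneg (hb j) p) (by rwa [le_div_iff₀' hj])
          (div_nonneg hq hp.le)
    _ = (∑' n, b n ^ p) ^ (q / p) * ((j + 1 : ℕ) : ℝ) ^ (-(q / p)) := by
        push_cast
        rw [Real.div_rpow (tsum_nonneg fun n => Real.rpow_nonneg (hb n) p) hj.le,
          Real.rpow_neg hj.le, div_eq_mul_inv]

theorem tsum_nat_add_rpow_le (hb : ∀ n, 0 ≤ b n) (hmono : Antitone b) (hp : 0 < p)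
    (hsum : Summable fun n => b n ^ p) {q : ℝ} (hpq : p < q) {s : ℕ} (hs : 0 < s) :
    ∑' n, b (n + s) ^ q ≤
      1 / (q / p - 1) * (∑' n, b n ^ p) ^ (q / p) * (s : ℝ) ^ (1 - q / p) := by
  set S := ∑' n, b n ^ p
  have hqp : 1 < q / p := (one_lt_div hp).mpr hpq
  have hbound (n : ℕ) : b (n + s) ^ q ≤ S ^ (q / p) * ((n + s + 1 : ℕ) : ℝ) ^ (-(q / p)) :=
    rpow_le_tsum_rpow_mul hb hmono hp hsum (hp.trans hpq).le (n + s)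
  have hmaj : Summable fun n : ℕ => S ^ (q / p) * ((n + s + 1 : ℕ) : ℝ) ^ (-(q / p)) := by
    refine Summable.mul_left _ ?_
    have := (summable_nat_add_iff (s + 1)).mpr (Real.summable_nat_rpow.mpr (neg_lt_neg hqp))
    simpa only [add_assoc] using this
  calc ∑' n, b (n + s) ^ q ≤ ∑' n : ℕ, S ^ (q / p) * ((n + s + 1 : ℕ) : ℝ) ^ (-(q / p)) :=
        Summable.tsum_le_tsum hbound
          (hmaj.of_nonneg_of_le (fun n => Real.rpow_nonneg (hb _) q) hbound) hmaj
    _ ≤ S ^ (q / p) * ((s : ℝ) ^ (1 - q / p) / (q / p - 1)) := by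
        rw [tsum_mul_left]
        exact mul_le_mul_of_nonneg_left (tsum_nat_add_rpow_neg_le hqp hs)
          (Real.rpow_nonneg (tsum_nonneg fun n => Real.rpow_nonneg (hb n) p) _)
    _ = 1 / (q / p - 1) * S ^ (q / p) * (s : ℝ) ^ (1 - q / p) := by ring

end Antitone

/-- Tail-sum bound for squares: for a nonincreasing nonnegative sequence `b`
(here `b n` stands for `b_{n+1}` of the paper) with `∑ b_j^p < ∞`, `0 < p < 1`,
`∑_{j ≥ s+1} b_j² ≤ (1/(2/p − 1)) (∑_{j≥1} b_j^p)^{2/p} s^{−2/p+1}`. -/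
theorem stmt3 (b : ℕ → ℝ) (hb : ∀ n, 0 ≤ b n) (hmono : Antitone b)
    (p : ℝ) (hp : 0 < p) (hp1 : p < 1)
    (hsum : Summable fun n => b n ^ p) :
    ∀ s : ℕ, 1 ≤ s →
      (∑' n : ℕ, b (n + s) ^ 2) ≤
        (1 / (2 / p - 1)) * (∑' n : ℕ, b n ^ p) ^ (2 / p) * (s : ℝ) ^ (-2 / p + 1) := by
  intro s hs
  have h := hmono.tsum_nat_add_rpow_le hb hp hsum (q := 2) (by linarith) hs
  simp only [Real.rpow_two] at h
  rwa [show -2 / p + 1 = 1 - 2 / p by ring]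
end

section
/- Let μ be the countable product of the uniform probability measures on [−1/2, 1/2] on the space [−1/2,1/2]^ℕ. Let p ∈ (0,1) and K > 0, and let (b_j)_{j≥1} be a nonincreasing sequence of nonnegative real numbers with Σ_{j≥1} b_j^p ≤ K. Then there exists a constant C, depending only on p and K, such that for every integer s ≥ 1 with Σ_{j≥s+1} b_j ≤ 1/2, Σ_{ℓ=1}^{∞} ∫ ( Σ_{j≥s+1} b_j y_j )^ℓ dμ(y) ≤ C · s^{−2/p + 1}; in particular every summand is nonnegative (the odd-ℓ integrals vanish) and the series converges. -/
/-!
Write `X y = ∑' n, b (n + s) * y (n + s)`. Since the coordinates are bounded by `1/2`, `|X| ≤ 1/4`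
almost surely. The product of symmetric laws is invariant under `y ↦ -y`, so the odd moments of `X`
vanish, and for `k ≥ 2` we have `|E X^k| ≤ 4^(2-k) E X^2`. The moment series therefore converges and
is at most `(4/3) E X^2 = (1/9) ∑' n, b (n + s) ^ 2` by independence. Finally
`b (n + s) ^ 2 ≤ b s ^ (2 - p) * b (n + s) ^ p` and, by monotonicity, `s * b s ^ p ≤ K`, whence
`∑' n, b (n + s) ^ 2 ≤ K ^ (2/p) * s ^ (1 - 2/p)`.
-/

open MeasureTheory ProbabilityTheory Filter

lemma isNegInvariant_restrict_Icc (a : ℝ) :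
    (volume.restrict (Set.Icc (-a) a)).IsNegInvariant := by
  constructor
  have h := Measure.restrict_map (μ := volume) measurable_neg (measurableSet_Icc (a := -a) (b := a))
  rw [Measure.map_neg_eq_self, Set.neg_preimage, Set.neg_Icc, neg_neg] at h
  exact h.symm

lemma isNegInvariant_of_iIndepFun_eval {ι G : Type*} [MeasurableSpace G] [Neg G] [MeasurableNeg G]
    {μ : Measure (ι → G)} [IsProbabilityMeasure μ] (hIndep : iIndepFun (fun i (y : ι → G) => y i) μ)
    (hsymm : ∀ i, (μ.map fun y => y i).IsNegInvariant) : μ.IsNegInvariant := by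
  have (i : ι) : IsProbabilityMeasure (μ.map fun y => y i) :=
    Measure.isProbabilityMeasure_map (measurable_pi_apply i).aemeasurable
  have hprod : μ = Measure.infinitePi fun i => μ.map fun y => y i := by
    simpa using hIndep.map_fun_eq_infinitePi_map measurable_pi_apply
  constructor
  rw [Measure.neg, hprod]
  refine (Measure.infinitePi_map_pi _ (f := fun _ => Neg.neg) fun _ => measurable_neg).trans ?_
  simp_rw [Measure.map_neg_eq_self]

lemma integral_eq_zero_of_odd {G : Type*} [MeasurableSpace G] [AddGroup G] [MeasurableNeg G]
    {μ : Measure G} [μ.IsNegInvariant] {f : G → ℝ} (hf : ∀ x, f (-x) = -f x) :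
    ∫ x, f x ∂μ = 0 := by
  have h := integral_neg_eq_self f μ
  simp only [hf, integral_neg] at h
  linarith

section BoundedSeries

variable {c y : ℕ → ℝ} {M : ℝ}

lemma summable_mul_of_abs_le (hc : Summable c) (hy : ∀ n, |y n| ≤ M) :
    Summable fun n => c n * y n :=
  hc.abs.mul_left M |>.of_norm_bounded fun n => by
    rw [Real.norm_eq_abs, abs_mul, mul_comm]
    exact mul_le_mul_of_nonneg_right (hy n) (abs_nonneg _)

lemma abs_sum_mul_le_of_abs_le (hc : Summable c) (hy : ∀ n, |y n| ≤ M) (s : Finset ℕ) :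
    |∑ n ∈ s, c n * y n| ≤ M * ∑' n, |c n| := by
  have hM : 0 ≤ M := (abs_nonneg _).trans (hy 0)
  calc |∑ n ∈ s, c n * y n| ≤ ∑ n ∈ s, M * |c n| :=
        Finset.abs_sum_le_sum_abs _ _ |>.trans <| Finset.sum_le_sum fun n _ => by
          rw [abs_mul, mul_comm]
          exact mul_le_mul_of_nonneg_right (hy n) (abs_nonneg _)
    _ ≤ M * ∑' n, |c n| := by
        rw [← Finset.mul_sum]
        exact mul_le_mul_of_nonneg_left (hc.abs.sum_le_tsum s fun n _ => abs_nonneg _) hM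

lemma abs_tsum_mul_le_of_abs_le (hc : Summable c) (hy : ∀ n, |y n| ≤ M) :
    |∑' n, c n * y n| ≤ M * ∑' n, |c n| :=
  le_of_tendsto' ((summable_mul_of_abs_le hc hy).hasSum.tendsto_sum_nat.abs)
    fun _ => abs_sum_mul_le_of_abs_le hc hy _

variable {Ω : Type*} [MeasurableSpace Ω] {μ : Measure Ω} {Y : ℕ → Ω → ℝ}

lemma aestronglyMeasurable_tsum_mul (hc : Summable c) (hYm : ∀ n, AEStronglyMeasurable (Y n) μ)
    (hbdd : ∀ n, ∀ᵐ ω ∂μ, |Y n ω| ≤ M) : AEStronglyMeasurable (fun ω => ∑' n, c n * Y n ω) μ :=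
  aestronglyMeasurable_of_tendsto_ae atTop
    (fun _ => Finset.aestronglyMeasurable_fun_sum _ fun n _ => (hYm n).const_mul (c n)) <|
    (ae_all_iff.2 hbdd).mono fun _ hω => (summable_mul_of_abs_le hc hω).hasSum.tendsto_sum_nat

lemma ae_abs_tsum_mul_le (hc : Summable c) (hbdd : ∀ n, ∀ᵐ ω ∂μ, |Y n ω| ≤ M) :
    ∀ᵐ ω ∂μ, |∑' n, c n * Y n ω| ≤ M * ∑' n, |c n| :=
  (ae_all_iff.2 hbdd).mono fun _ hω => abs_tsum_mul_le_of_abs_le hc hω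

variable [IsProbabilityMeasure μ]

lemma integral_sq_sum_mul (hY : ∀ n, MemLp (Y n) 2 μ) (hmean : ∀ n, ∫ ω, Y n ω ∂μ = 0)
    (hindep : Pairwise fun i j => Y i ⟂ᵢ[μ] Y j) (s : Finset ℕ) :
    ∫ ω, (∑ n ∈ s, c n * Y n ω) ^ 2 ∂μ = ∑ n ∈ s, c n ^ 2 * ∫ ω, Y n ω ^ 2 ∂μ := by
  have hcY (n : ℕ) : MemLp (fun ω => c n * Y n ω) 2 μ := (hY n).const_mul (c n)
  have hS : MemLp (fun ω => ∑ n ∈ s, c n * Y n ω) 2 μ := memLp_finsetSum s fun n _ => hcY n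
  have hSmean : ∫ ω, ∑ n ∈ s, c n * Y n ω ∂μ = 0 := by
    rw [integral_finsetSum s fun n _ => (hcY n).integrable one_le_two]
    simp [integral_const_mul, hmean]
  rw [← variance_of_integral_eq_zero hS.aestronglyMeasurable.aemeasurable hSmean, ← Finset.sum_fn,
    IndepFun.variance_sum (fun n _ => hcY n) fun i _ j _ hij =>
      (hindep hij).comp (measurable_const_mul (c i)) (measurable_const_mul (c j))]
  refine Finset.sum_congr rfl fun n _ => ?_
  rw [variance_const_mul, variance_of_integral_eq_zero (hY n).aestronglyMeasurable.aemeasurable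
    (hmean n)]

lemma hasSum_integral_sq_tsum_mul (hc : Summable c) (hYm : ∀ n, AEStronglyMeasurable (Y n) μ)
    (hbdd : ∀ n, ∀ᵐ ω ∂μ, |Y n ω| ≤ M) (hmean : ∀ n, ∫ ω, Y n ω ∂μ = 0)
    (hindep : Pairwise fun i j => Y i ⟂ᵢ[μ] Y j) :
    HasSum (fun n => c n ^ 2 * ∫ ω, Y n ω ^ 2 ∂μ) (∫ ω, (∑' n, c n * Y n ω) ^ 2 ∂μ) := by
  have hY (n : ℕ) : MemLp (Y n) 2 μ := MemLp.of_bound (hYm n) M (hbdd n)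
  have hbdd' : ∀ᵐ ω ∂μ, ∀ n, |Y n ω| ≤ M := ae_all_iff.2 hbdd
  rw [hasSum_iff_tendsto_nat_of_nonneg (fun n => by positivity)]
  simp_rw [← integral_sq_sum_mul hY hmean hindep]
  refine tendsto_integral_of_dominated_convergence (fun _ => (M * ∑' n, |c n|) ^ 2)
    (fun N => ((memLp_finsetSum _ fun n _ => (hY n).const_mul (c n)).aestronglyMeasurable.pow 2))
    (integrable_const _) (fun N => ?_) ?_
  · filter_upwards [hbdd'] with ω hω
    rw [Real.norm_eq_abs, abs_pow]
    exact pow_le_pow_left₀ (abs_nonneg _) (abs_sum_mul_le_of_abs_le hc hω _) 2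
  · filter_upwards [hbdd'] with ω hω
    exact ((summable_mul_of_abs_le hc hω).hasSum.tendsto_sum_nat).pow 2

end BoundedSeries

section Moments

variable {Ω : Type*} [MeasurableSpace Ω] {μ : Measure Ω} [IsProbabilityMeasure μ] {X : Ω → ℝ}
  {R : ℝ}

lemma integrable_pow_of_abs_le (hXm : AEStronglyMeasurable X μ) (hX : ∀ᵐ ω ∂μ, |X ω| ≤ R)
    (k : ℕ) : Integrable (fun ω => X ω ^ k) μ :=
  Integrable.of_bound (hXm.pow k) (R ^ k) <| hX.mono fun ω hω => by
    rw [norm_pow, Real.norm_eq_abs]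
    exact pow_le_pow_left₀ (abs_nonneg _) hω k

lemma abs_integral_pow_add_two_le (hXm : AEStronglyMeasurable X μ) (hX : ∀ᵐ ω ∂μ, |X ω| ≤ R)
    (k : ℕ) : |∫ ω, X ω ^ (k + 2) ∂μ| ≤ R ^ k * ∫ ω, X ω ^ 2 ∂μ := by
  rw [← integral_const_mul]
  refine (abs_integral_le_integral_abs).trans (integral_mono_ae ?_ ?_ ?_)
  · exact (integrable_pow_of_abs_le hXm hX _).abs
  · exact (integrable_pow_of_abs_le hXm hX 2).const_mul _
  filter_upwards [hX] with ω hω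
  rw [pow_add, abs_mul, abs_pow, abs_of_nonneg (sq_nonneg (X ω))]
  exact mul_le_mul_of_nonneg_right (pow_le_pow_left₀ (abs_nonneg _) hω k) (sq_nonneg _)

lemma tsum_integral_pow_succ_le (hXm : AEStronglyMeasurable X μ) (hX : ∀ᵐ ω ∂μ, |X ω| ≤ R)
    (hR : R < 1) (hmean : ∫ ω, X ω ∂μ = 0) :
    Summable (fun l : ℕ => ∫ ω, X ω ^ (l + 1) ∂μ) ∧
      ∑' l : ℕ, ∫ ω, X ω ^ (l + 1) ∂μ ≤ (1 - R)⁻¹ * ∫ ω, X ω ^ 2 ∂μ := by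
  obtain ⟨ω, hω⟩ := hX.exists
  have hR0 : 0 ≤ R := (abs_nonneg _).trans hω
  have hgeom : HasSum (fun k : ℕ => R ^ k * ∫ ω, X ω ^ 2 ∂μ) ((1 - R)⁻¹ * ∫ ω, X ω ^ 2 ∂μ) :=
    (hasSum_geometric_of_lt_one hR0 hR).mul_right _
  have hshift : Summable fun k : ℕ => ∫ ω, X ω ^ (k + 2) ∂μ :=
    hgeom.summable.of_norm_bounded fun k => abs_integral_pow_add_two_le hXm hX k
  have hsum : Summable fun l : ℕ => ∫ ω, X ω ^ (l + 1) ∂μ := (summable_nat_add_iff 1).1 hshift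
  refine ⟨hsum, ?_⟩
  rw [hsum.tsum_eq_zero_add]
  simp only [pow_one, hmean, zero_add]
  rw [← hgeom.tsum_eq]
  exact hshift.tsum_le_tsum (fun k => (le_abs_self _).trans (abs_integral_pow_add_two_le hXm hX k))
    hgeom.summable

end Moments

lemma Real.rpow_le_rpow_sub_mul_rpow {x a p q : ℝ} (hx : 0 ≤ x) (hxa : x ≤ a) (hp : 0 ≤ p)
    (hpq : p ≤ q) : x ^ q ≤ a ^ (q - p) * x ^ p := by
  calc x ^ q = x ^ (q - p) * x ^ p := by
        rw [← Real.rpow_add_of_nonneg hx (sub_nonneg.2 hpq) hp, sub_add_cancel]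
    _ ≤ a ^ (q - p) * x ^ p := by gcongr

lemma Antitone.natCast_mul_le_tsum {f : ℕ → ℝ} (hf : Antitone f) (hf0 : ∀ n, 0 ≤ f n)
    (hsum : Summable f) (s : ℕ) : (s : ℝ) * f s ≤ ∑' n, f n := by
  calc (s : ℝ) * f s = ∑ _n ∈ Finset.range s, f s := by simp
    _ ≤ ∑ n ∈ Finset.range s, f n :=
        Finset.sum_le_sum fun n hn => hf (Finset.mem_range.1 hn).le
    _ ≤ ∑' n, f n := hsum.sum_le_tsum _ fun n _ => hf0 n

lemma Real.rpow_two_sub_mul_le {x p K s : ℝ} (hx : 0 ≤ x) (hp : 0 < p) (hp2 : p ≤ 2) (hK : 0 ≤ K)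
    (hs : 0 < s) (hxK : x ^ p ≤ K / s) : x ^ (2 - p) * K ≤ K ^ (2 / p) * s ^ (-2 / p + 1) := by
  have hq : 0 ≤ (2 - p) / p := div_nonneg (by linarith) hp.le
  calc x ^ (2 - p) * K = (x ^ p) ^ ((2 - p) / p) * K := by
        rw [← Real.rpow_mul hx, mul_div_cancel₀ _ hp.ne']
    _ ≤ (K / s) ^ ((2 - p) / p) * K := by gcongr
    _ = K ^ ((2 - p) / p + 1) * s ^ (-((2 - p) / p)) := by
        rw [Real.div_rpow hK hs.le, Real.rpow_add' hK (by positivity), Real.rpow_neg hs.le,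
          Real.rpow_one]
        ring
    _ = K ^ (2 / p) * s ^ (-2 / p + 1) := by
        congr 2 <;> field_simp <;> ring

section AntitoneSequence

variable {b : ℕ → ℝ} {p K : ℝ}

lemma Antitone.summable_of_summable_rpow (hb : Antitone b) (hb0 : ∀ n, 0 ≤ b n) (hp : 0 ≤ p)
    (hp1 : p ≤ 1) (hbp : Summable fun n => b n ^ p) : Summable b :=
  (hbp.mul_left (b 0 ^ (1 - p))).of_nonneg_of_le hb0 fun n => by
    simpa using Real.rpow_le_rpow_sub_mul_rpow (hb0 n) (hb (Nat.zero_le n)) hp hp1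

lemma Antitone.tsum_sq_nat_add_le (hb : Antitone b) (hb0 : ∀ n, 0 ≤ b n) (hp : 0 < p)
    (hp2 : p ≤ 2) (hbp : Summable fun n => b n ^ p) (hbK : ∑' n, b n ^ p ≤ K) {s : ℕ}
    (hs : 1 ≤ s) : ∑' n, b (n + s) ^ 2 ≤ K ^ (2 / p) * (s : ℝ) ^ (-2 / p + 1) := by
  have hK : 0 ≤ K := (tsum_nonneg fun n => Real.rpow_nonneg (hb0 n) p).trans hbK
  have hterm (n : ℕ) : b (n + s) ^ 2 ≤ b s ^ (2 - p) * b (n + s) ^ p := by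
    simpa using Real.rpow_le_rpow_sub_mul_rpow (q := 2) (hb0 _) (hb (Nat.le_add_left s n)) hp.le
      hp2
  have htail : Summable fun n => b (n + s) ^ p := (summable_nat_add_iff s).2 hbp
  have htailK : ∑' n, b (n + s) ^ p ≤ K :=
    (htail.tsum_le_tsum_of_inj (· + s) (add_left_injective s)
      (fun n _ => Real.rpow_nonneg (hb0 n) p) (fun _ => le_rfl) hbp).trans hbK
  have hbs : b s ^ p ≤ K / s := by
    rw [le_div_iff₀ (by exact_mod_cast hs), mul_comm]
    have hanti : Antitone fun n => b n ^ p := fun m n h => Real.rpow_le_rpow (hb0 _) (hb h) hp.le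
    exact (hanti.natCast_mul_le_tsum (fun n => Real.rpow_nonneg (hb0 n) p) hbp s).trans hbK
  calc ∑' n, b (n + s) ^ 2 ≤ ∑' n, b s ^ (2 - p) * b (n + s) ^ p :=
        (htail.mul_left _).of_nonneg_of_le (fun n => sq_nonneg _) hterm |>.tsum_le_tsum hterm
          (htail.mul_left _)
    _ ≤ b s ^ (2 - p) * K := by
        rw [tsum_mul_left]
        exact mul_le_mul_of_nonneg_left htailK (Real.rpow_nonneg (hb0 s) _)
    _ ≤ K ^ (2 / p) * (s : ℝ) ^ (-2 / p + 1) :=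
        Real.rpow_two_sub_mul_le (hb0 s) hp hp2 hK (by exact_mod_cast hs) hbs

end AntitoneSequence

section UniformCoordinate

variable {Ω : Type*} [MeasurableSpace Ω] {μ : Measure Ω} {Z : Ω → ℝ}

lemma ae_abs_le_of_map_eq_restrict_Icc {a : ℝ} (hZ : Measurable Z)
    (hlaw : μ.map Z = volume.restrict (Set.Icc (-a) a)) : ∀ᵐ ω ∂μ, |Z ω| ≤ a := by
  refine ae_of_ae_map (p := fun x => |x| ≤ a) hZ.aemeasurable ?_
  rw [hlaw]
  exact ae_restrict_of_forall_mem measurableSet_Icc fun x hx => abs_le.2 hx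

lemma integral_sq_of_map_eq_uniform (hZ : Measurable Z)
    (hlaw : μ.map Z = volume.restrict (Set.Icc (-(1 / 2)) (1 / 2))) :
    ∫ ω, Z ω ^ 2 ∂μ = 1 / 12 := by
  rw [← integral_map (f := fun x => x ^ 2) hZ.aemeasurable (by fun_prop), hlaw,
    integral_Icc_eq_integral_Ioc, ← intervalIntegral.integral_of_le (by norm_num), integral_pow]
  norm_num

end UniformCoordinate

theorem stmt12_general (μ : Measure (ℕ → ℝ)) [IsProbabilityMeasure μ]
    (hIndep : iIndepFun (m := fun _ : ℕ => (inferInstance : MeasurableSpace ℝ))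
      (fun j => fun y : ℕ → ℝ => y j) μ)
    (hUnif : ∀ j : ℕ, μ.map (fun y : ℕ → ℝ => y j) =
      volume.restrict (Set.Icc (-(1 / 2) : ℝ) (1 / 2)))
    (p K : ℝ) (hp : 0 < p) (hp1 : p < 1) :
    ∃ C : ℝ, ∀ b : ℕ → ℝ, (∀ n, 0 ≤ b n) → Antitone b →
      Summable (fun n => b n ^ p) → (∑' n : ℕ, b n ^ p) ≤ K →
      ∀ s : ℕ, 1 ≤ s → (∑' n : ℕ, b (n + s)) ≤ 1 / 2 →
        (∀ l : ℕ,
          0 ≤ ∫ y : ℕ → ℝ, (∑' n : ℕ, b (n + s) * y (n + s)) ^ (l + 1) ∂μ) ∧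
        Summable (fun l : ℕ =>
          ∫ y : ℕ → ℝ, (∑' n : ℕ, b (n + s) * y (n + s)) ^ (l + 1) ∂μ) ∧
        (∑' l : ℕ, ∫ y : ℕ → ℝ, (∑' n : ℕ, b (n + s) * y (n + s)) ^ (l + 1) ∂μ)
          ≤ C * (s : ℝ) ^ (-2 / p + 1) := by
  have hcoord (j : ℕ) : Measurable fun y : ℕ → ℝ => y j := measurable_pi_apply j
  have hbdd (j : ℕ) : ∀ᵐ y ∂μ, |y j| ≤ 1 / 2 :=
    ae_abs_le_of_map_eq_restrict_Icc (hcoord j) (hUnif j)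
  have : μ.IsNegInvariant := isNegInvariant_of_iIndepFun_eval hIndep fun j => by
    rw [hUnif j]
    exact isNegInvariant_restrict_Icc _
  refine ⟨K ^ (2 / p) / 9, fun b hb0 hb hbp hbK s hs htail => ?_⟩
  set X : (ℕ → ℝ) → ℝ := fun y => ∑' n, b (n + s) * y (n + s) with hX
  have hc : Summable fun n => b (n + s) :=
    (summable_nat_add_iff s).2 (hb.summable_of_summable_rpow hb0 hp.le hp1.le hbp)
  have hXm : AEStronglyMeasurable X μ :=
    aestronglyMeasurable_tsum_mul hc (fun _ => (hcoord _).aestronglyMeasurable) fun _ => hbdd _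
  have hXbdd : ∀ᵐ y ∂μ, |X y| ≤ 1 / 4 := by
    filter_upwards [ae_abs_tsum_mul_le hc fun n => hbdd (n + s)] with y hy
    simp only [abs_of_nonneg (hb0 _)] at hy
    linarith
  have hodd (k : ℕ) (hk : Odd k) : ∫ y, X y ^ k ∂μ = 0 :=
    integral_eq_zero_of_odd fun y => by simp [hX, tsum_neg, hk.neg_pow]
  have hV : ∫ y, X y ^ 2 ∂μ = (∑' n, b (n + s) ^ 2) / 12 := by
    have h := hasSum_integral_sq_tsum_mul hc (fun n => (hcoord (n + s)).aestronglyMeasurable)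
      -- each coordinate is an odd function, hence centred under the symmetric `μ`
      (fun n => hbdd (n + s)) (fun _ => integral_eq_zero_of_odd fun _ => rfl)
      fun i j hij => hIndep.indepFun ((add_left_injective s).ne hij)
    simp only [integral_sq_of_map_eq_uniform (hcoord _) (hUnif _)] at h
    rw [← h.tsum_eq, tsum_mul_right]
    ring
  obtain ⟨hsum, hle⟩ :=
    tsum_integral_pow_succ_le hXm hXbdd (by norm_num) (by simpa using hodd 1 odd_one)
  refine ⟨fun l => ?_, hsum, ?_⟩
  · rcases Nat.even_or_odd (l + 1) with he | ho
    · exact integral_nonneg fun y => he.pow_nonneg _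
    · exact (hodd _ ho).ge
  calc _ ≤ (1 - 1 / 4)⁻¹ * ∫ y, X y ^ 2 ∂μ := hle
    _ = (∑' n, b (n + s) ^ 2) / 9 := by rw [hV]; ring
    _ ≤ K ^ (2 / p) * (s : ℝ) ^ (-2 / p + 1) / 9 := by
        gcongr
        exact hb.tsum_sq_nat_add_le hb0 hp (by linarith) hbp hbK hs
    _ = K ^ (2 / p) / 9 * (s : ℝ) ^ (-2 / p + 1) := by ring

/-- Combined moment estimate for the dimension-truncation argument:
`μ` is a probability measure on the sequence space whose coordinates are independent
and uniformly distributed on `[−1/2,1/2]` (the uniform distribution on `[−1/2,1/2]`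
being Lebesgue measure restricted to it, which has total mass one).
If `b` is nonincreasing, nonnegative, with `∑_j b_j^p ≤ K`, `p ∈ (0,1)`, then there is
`C = C(p,K)` such that for every `s ≥ 1` with `∑_{j≥s+1} b_j ≤ 1/2`, each integral
`∫ (∑_{j≥s+1} b_j y_j)^ℓ dμ` (for `ℓ ≥ 1`) is nonnegative, the series over `ℓ ≥ 1`
of these integrals converges, and its sum is at most `C s^{−2/p+1}`.
Here `b n` stands for `b_{n+1}` of the paper, and the sum over `ℓ ≥ 1` is written as
a sum over `ℓ = l + 1`, `l : ℕ`. -/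
theorem stmt12 (μ : Measure (ℕ → ℝ)) [IsProbabilityMeasure μ]
    (hIndep : iIndepFun (m := fun _ : ℕ => (inferInstance : MeasurableSpace ℝ))
      (fun j => fun y : ℕ → ℝ => y j) μ)
    (hUnif : ∀ j : ℕ, μ.map (fun y : ℕ → ℝ => y j) =
      volume.restrict (Set.Icc (-(1 / 2) : ℝ) (1 / 2)))
    (p K : ℝ) (hp : 0 < p) (hp1 : p < 1) (hK : 0 < K) :
    ∃ C : ℝ, ∀ b : ℕ → ℝ, (∀ n, 0 ≤ b n) → Antitone b →
      Summable (fun n => b n ^ p) → (∑' n : ℕ, b n ^ p) ≤ K →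
      ∀ s : ℕ, 1 ≤ s → (∑' n : ℕ, b (n + s)) ≤ 1 / 2 →
        (∀ l : ℕ,
          0 ≤ ∫ y : ℕ → ℝ, (∑' n : ℕ, b (n + s) * y (n + s)) ^ (l + 1) ∂μ) ∧
        Summable (fun l : ℕ =>
          ∫ y : ℕ → ℝ, (∑' n : ℕ, b (n + s) * y (n + s)) ^ (l + 1) ∂μ) ∧
        (∑' l : ℕ, ∫ y : ℕ → ℝ, (∑' n : ℕ, b (n + s) * y (n + s)) ^ (l + 1) ∂μ)
          ≤ C * (s : ℝ) ^ (-2 / p + 1) :=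
  stmt12_general μ hIndep hUnif p K hp hp1
end
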